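/- Let n ≥ 1. There is a constant c_n > 0 such that for every polynomial p(ξ) = b₀ + b₁ξ + ⋯ + b_nξⁿ whose largest coefficient in absolute value equals 1 (i.e. max_{0≤i≤n} |b_i| = 1) and for every 0 < γ ≤ c_n, there exist points ξ₁, …, ξ_{n(n+1)/2} ∈ ℝ such that {ξ ∈ [-4,4] : |p(ξ)| < γ} ⊂ ⋃_{i=1}^{n(n+1)/2} [ξ_i − 4γ^{1/2ⁿ}, ξ_i + 4γ^{1/2ⁿ}]. -/

import Mathlib

/-!
Between two consecutive zeros of `p'` the polynomial `p` is monotone, so two points of the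
sublevel set `{|p| < γ}` that are not separated by a point of `{-4} ∪ {p' = 0}` span an interval
`[x, x + ℓ]` on which `|p| ≤ γ`. Such an interval is short. Write `q = p(x + ·)`: inverting a
Vandermonde matrix at nodes in `[0, 1]` bounds the coefficients `ℓʲ qⱼ` of `u ↦ q(ℓ u)` by
`O(γ)`, hence, for `ℓ ≤ 1`, all coefficients of `ℓⁿ q`; undoing the Taylor shift then bounds
`ℓⁿ |pᵢ|`, and `|pᵢ| = 1` for some `i`, so `ℓⁿ = O(γ)`. For small `γ` this is below
`(4 γ^{1/2ⁿ})ⁿ`, and there are at most `n ≤ n(n+1)/2` pieces.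
-/

open Polynomial Set Matrix

theorem Matrix.exists_norm_le_mul_norm_vandermonde_mulVec {𝕜 : Type*}
    [NontriviallyNormedField 𝕜] [CompleteSpace 𝕜] {n : ℕ} {s : Fin n → 𝕜}
    (hs : Function.Injective s) :
    ∃ C, 0 ≤ C ∧ ∀ a : Fin n → 𝕜, ‖a‖ ≤ C * ‖vandermonde s *ᵥ a‖ := by
  set V := vandermonde s
  have hV : IsUnit V.det := isUnit_iff_ne_zero.2 (det_vandermonde_ne_zero_iff.2 hs)
  let L := LinearMap.toContinuousLinearMap (toLin' V⁻¹)
  refine ⟨‖L‖, norm_nonneg L, fun a => ?_⟩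
  have hLV : L (V *ᵥ a) = a := by
    simp [L, mulVec_mulVec, nonsing_inv_mul _ hV]
  calc ‖a‖ = ‖L (V *ᵥ a)‖ := by rw [hLV]
    _ ≤ ‖L‖ * ‖V *ᵥ a‖ := L.le_opNorm _

theorem Polynomial.exists_abs_coeff_le_mul_of_abs_eval_le (n : ℕ) :
    ∃ C, 0 ≤ C ∧ ∀ q : ℝ[X], q.natDegree ≤ n → ∀ γ, (∀ u ∈ Icc (0 : ℝ) 1, |q.eval u| ≤ γ) →
      ∀ j, |q.coeff j| ≤ C * γ := by
  set s : Fin (n + 1) → ℝ := fun k => k / (n + 1)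
  have hs : Function.Injective s := fun k k' h =>
    Fin.ext (by simpa [s, div_left_inj' (n.cast_add_one_pos (α := ℝ)).ne'] using h)
  have hs01 : ∀ k, s k ∈ Icc (0 : ℝ) 1 := fun k =>
    ⟨by positivity, div_le_one_of_le₀ (by exact_mod_cast k.is_lt.le) (by positivity)⟩
  obtain ⟨C, hC, hV⟩ := Matrix.exists_norm_le_mul_norm_vandermonde_mulVec hs
  refine ⟨C, hC, fun q hq γ hqγ j => ?_⟩
  have hγ : 0 ≤ γ := (abs_nonneg _).trans (hqγ 0 ⟨le_rfl, zero_le_one⟩)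
  have hvalues : ‖vandermonde s *ᵥ fun j : Fin (n + 1) => q.coeff j‖ ≤ γ := by
    refine (pi_norm_le_iff_of_nonneg hγ).2 fun k => ?_
    have heval : (vandermonde s *ᵥ fun j : Fin (n + 1) => q.coeff j) k = q.eval (s k) := by
      rw [eval_eq_sum_range' (Nat.lt_succ_of_le hq), ← Fin.sum_univ_eq_sum_range]
      simp [mulVec, dotProduct, vandermonde_apply, mul_comm]
    rw [Real.norm_eq_abs, heval]
    exact hqγ _ (hs01 k)
  rcases lt_or_ge n j with hj | hj
  · rw [coeff_eq_zero_of_natDegree_lt (hq.trans_lt hj), abs_zero]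
    positivity
  · calc |q.coeff j| ≤ ‖fun j : Fin (n + 1) => q.coeff j‖ :=
          norm_le_pi_norm (fun j : Fin (n + 1) => q.coeff j) ⟨j, Nat.lt_succ_of_le hj⟩
      _ ≤ C * γ := (hV _).trans (mul_le_mul_of_nonneg_left hvalues hC)

theorem Polynomial.abs_coeff_taylor_le {Q : ℝ[X]} {n : ℕ} (hQ : Q.natDegree ≤ n) {M : ℝ}
    (hM : ∀ j, |Q.coeff j| ≤ M) (x : ℝ) (i : ℕ) :
    |(taylor x Q).coeff i| ≤ (n + 1) * ((2 * (1 + |x|)) ^ n * M) := by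
  have hM0 : 0 ≤ M := (abs_nonneg _).trans (hM 0)
  have hterm : ∀ m ∈ Finset.range (n + 1),
      |(hasseDeriv i Q).coeff m * x ^ m| ≤ (2 * (1 + |x|)) ^ n * M := by
    intro m _
    rw [hasseDeriv_coeff, abs_mul, abs_mul, abs_pow]
    rcases lt_or_ge n (m + i) with hlt | hle
    · rw [coeff_eq_zero_of_natDegree_lt (hQ.trans_lt hlt), abs_zero, mul_zero, zero_mul]
      positivity
    have hchoose : |((m + i).choose i : ℝ)| ≤ 2 ^ n := by
      rw [Nat.abs_cast]
      exact_mod_cast (Nat.choose_le_two_pow _ _).trans (Nat.pow_le_pow_right two_pos hle)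
    have hpow : |x| ^ m ≤ (1 + |x|) ^ n :=
      (pow_le_pow_left₀ (abs_nonneg x) (by linarith) m).trans
        (pow_le_pow_right₀ (by linarith [abs_nonneg x]) (by omega))
    calc |((m + i).choose i : ℝ)| * |Q.coeff (m + i)| * |x| ^ m
        ≤ 2 ^ n * M * (1 + |x|) ^ n := by gcongr; exact hM _
      _ = (2 * (1 + |x|)) ^ n * M := by rw [mul_pow]; ring
  have hdeg : (hasseDeriv i Q).natDegree < n + 1 :=
    Nat.lt_succ_of_le ((natDegree_hasseDeriv_le Q i).trans (Nat.sub_le_of_le_add (by omega)))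
  calc |(taylor x Q).coeff i|
      = |∑ m ∈ Finset.range (n + 1), (hasseDeriv i Q).coeff m * x ^ m| := by
        rw [taylor_coeff, eval_eq_sum_range' hdeg]
    _ ≤ ∑ m ∈ Finset.range (n + 1), |(hasseDeriv i Q).coeff m * x ^ m| :=
        Finset.abs_sum_le_sum_abs _ _
    _ ≤ ∑ _m ∈ Finset.range (n + 1), (2 * (1 + |x|)) ^ n * M := Finset.sum_le_sum hterm
    _ = (n + 1) * ((2 * (1 + |x|)) ^ n * M) := by simp

theorem Polynomial.exists_pow_le_mul_of_abs_eval_le_on_Icc (n : ℕ) (B : ℝ) :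
    ∃ A, 0 ≤ A ∧ ∀ p : ℝ[X], p.natDegree ≤ n → ∀ i, 1 ≤ |p.coeff i| →
      ∀ x ℓ γ : ℝ, |x| ≤ B → 0 ≤ ℓ → ℓ ≤ 1 → (∀ t ∈ Icc x (x + ℓ), |p.eval t| ≤ γ) →
        ℓ ^ n ≤ A * γ := by
  obtain ⟨K, hK, hcoeff⟩ := exists_abs_coeff_le_mul_of_abs_eval_le n
  refine ⟨(n + 1) * ((2 * (1 + max B 0)) ^ n * K), by positivity, ?_⟩
  intro p hp i hi x ℓ γ hx hℓ0 hℓ1 hpγ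
  have hγ : 0 ≤ γ := (abs_nonneg _).trans (hpγ x ⟨le_rfl, by linarith⟩)
  set Q := taylor x p
  have hQ : Q.natDegree ≤ n := (natDegree_taylor p x).trans_le hp
  have hrescaled : ∀ j, ℓ ^ j * |Q.coeff j| ≤ K * γ := by
    intro j
    have hdeg : (Q.comp (C ℓ * X)).natDegree ≤ n :=
      natDegree_comp_le.trans ((Nat.mul_le_mul hQ
        ((natDegree_C_mul_le _ _).trans natDegree_X_le)).trans_eq (mul_one n))
    have heval : ∀ u ∈ Icc (0 : ℝ) 1, |(Q.comp (C ℓ * X)).eval u| ≤ γ := fun u hu => by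
      rw [eval_comp, taylor_eval, eval_mul, eval_C, eval_X]
      exact hpγ _ ⟨by nlinarith [hu.1], by nlinarith [hu.2]⟩
    have := hcoeff _ hdeg γ heval j
    rwa [comp_C_mul_X_coeff, abs_mul, abs_pow, abs_of_nonneg hℓ0, mul_comm] at this
  have hsmul : ∀ j, |(ℓ ^ n • Q).coeff j| ≤ K * γ := by
    intro j
    rw [coeff_smul, smul_eq_mul, abs_mul, abs_of_nonneg (by positivity)]
    refine le_trans ?_ (hrescaled j)
    rcases le_or_gt j n with hj | hj
    · exact mul_le_mul_of_nonneg_right (pow_le_pow_of_le_one hℓ0 hℓ1 hj) (abs_nonneg _)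
    · simp [coeff_eq_zero_of_natDegree_lt (hQ.trans_lt hj)]
  have hback : taylor (-x) (ℓ ^ n • Q) = ℓ ^ n • p := by
    rw [map_smul, taylor_taylor, neg_add_cancel, taylor_zero]
  have hcoeff_p := abs_coeff_taylor_le ((natDegree_smul_le _ _).trans hQ) hsmul (-x) i
  rw [hback, coeff_smul, smul_eq_mul, abs_mul, abs_of_nonneg (by positivity), abs_neg]
    at hcoeff_p
  calc ℓ ^ n ≤ ℓ ^ n * |p.coeff i| := le_mul_of_one_le_right (by positivity) hi
    _ ≤ (n + 1) * ((2 * (1 + |x|)) ^ n * (K * γ)) := hcoeff_p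
    _ ≤ (n + 1) * ((2 * (1 + max B 0)) ^ n * (K * γ)) := by
        gcongr; exact hx.trans (le_max_left B 0)
    _ = (n + 1) * ((2 * (1 + max B 0)) ^ n * K) * γ := by ring

theorem abs_le_max_abs_of_deriv_ne_zero {f : ℝ → ℝ} (hf : Differentiable ℝ f) {a b : ℝ}
    (hf' : ∀ t ∈ Ioo a b, deriv f t ≠ 0) {t : ℝ} (ht : t ∈ Icc a b) :
    |f t| ≤ max |f a| |f b| := by
  have hab : a ≤ b := ht.1.trans ht.2
  rw [← interior_Icc] at hf'
  rcases hasDerivWithinAt_forall_lt_or_forall_gt_of_forall_ne (convex_Icc a b).interior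
    (fun x _ => (hf x).hasDerivAt.hasDerivWithinAt) hf' with hneg | hpos
  · have hanti := antitoneOn_of_deriv_nonpos (convex_Icc a b) hf.continuous.continuousOn
      hf.differentiableOn fun x hx => (hneg x hx).le
    rw [max_comm]
    exact abs_le_max_abs_abs (hanti ht ⟨hab, le_rfl⟩ ht.2) (hanti ⟨le_rfl, hab⟩ ht ht.1)
  · have hmono := monotoneOn_of_deriv_nonneg (convex_Icc a b) hf.continuous.continuousOn
      hf.differentiableOn fun x hx => (hpos x hx).le
    exact abs_le_max_abs_abs (hmono ⟨le_rfl, hab⟩ ht ht.1) (hmono ht ⟨hab, le_rfl⟩ ht.2)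

theorem Polynomial.abs_eval_le_max_of_forall_notMem_roots_derivative (p : ℝ[X]) {a b : ℝ}
    (hp : ∀ t ∈ Ioo a b, t ∉ p.derivative.roots) {t : ℝ} (ht : t ∈ Icc a b) :
    |p.eval t| ≤ max |p.eval a| |p.eval b| := by
  by_cases hp' : p.derivative = 0
  · rw [eq_C_of_derivative_eq_zero hp']
    simp
  · refine abs_le_max_abs_of_deriv_ne_zero p.differentiable (fun s hs => ?_) ht
    rw [Polynomial.deriv]
    exact fun h => hp s hs ((mem_roots hp').2 h)

theorem Polynomial.card_insert_roots_derivative_le {R : Type*} [CommRing R] [IsDomain R]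
    [DecidableEq R] {p : R[X]} {n : ℕ} (hp : p.natDegree ≤ n) (hn : 1 ≤ n) (a : R) :
    (insert a p.derivative.roots.toFinset).card ≤ n :=
  calc (insert a p.derivative.roots.toFinset).card
      ≤ p.derivative.roots.toFinset.card + 1 := Finset.card_insert_le _ _
    _ ≤ p.derivative.natDegree + 1 :=
        Nat.succ_le_succ ((Multiset.toFinset_card_le _).trans (card_roots' _))
    _ ≤ n := by have := natDegree_derivative_le p; omega

theorem exists_subset_Icc_of_forall_sub_le {T : Set ℝ} {r : ℝ}
    (hT : ∀ s ∈ T, ∀ s' ∈ T, s ≤ s' → s' - s ≤ r) : ∃ c, T ⊆ Icc (c - r) (c + r) := by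
  rcases T.eq_empty_or_nonempty with rfl | ⟨c, hc⟩
  · exact ⟨0, empty_subset _⟩
  refine ⟨c, fun s hs => ?_⟩
  rcases le_total s c with h | h
  · have := hT s hs c hc h
    constructor <;> linarith
  · have := hT c hc s hs h
    constructor <;> linarith

theorem exists_cover_of_forall_sub_le {S : Set ℝ} {R : Finset ℝ} {r : ℝ}
    (hbelow : ∀ s ∈ S, ∃ ρ ∈ R, ρ ≤ s)
    (hgap : ∀ s ∈ S, ∀ s' ∈ S, s ≤ s' → (∀ ρ ∈ R, ρ ∉ Ioo s s') → s' - s ≤ r) :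
    ∃ c : ℝ → ℝ, S ⊆ ⋃ ρ ∈ R, Icc (c ρ - r) (c ρ + r) := by
  set piece : ℝ → Set ℝ := fun ρ => {s ∈ S | ρ ≤ s ∧ ∀ ρ' ∈ R, ρ' ≤ s → ρ' ≤ ρ}
  have hpiece : ∀ ρ, ∃ c, piece ρ ⊆ Icc (c - r) (c + r) := fun ρ =>
    exists_subset_Icc_of_forall_sub_le fun s hs s' hs' hss' =>
      hgap s hs.1 s' hs'.1 hss' fun ρ' hρ' hmem =>
        (hmem.1.trans_le' hs.2.1).not_ge (hs'.2.2 ρ' hρ' hmem.2.le)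
  choose c hc using hpiece
  refine ⟨c, fun s hs => ?_⟩
  have hne : (R.filter (· ≤ s)).Nonempty := by
    obtain ⟨ρ, hρ, hρs⟩ := hbelow s hs
    exact ⟨ρ, Finset.mem_filter.2 ⟨hρ, hρs⟩⟩
  obtain ⟨hρR, hρs⟩ := Finset.mem_filter.1 ((R.filter (· ≤ s)).max'_mem hne)
  exact mem_biUnion hρR <| hc _ ⟨hs, hρs, fun ρ' hρ' hρ's =>
    (R.filter (· ≤ s)).le_max' ρ' (Finset.mem_filter.2 ⟨hρ', hρ's⟩)⟩

theorem Polynomial.exists_cover_sublevelSet (n : ℕ) (B : ℝ) :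
    ∃ A, 0 ≤ A ∧ ∀ p : ℝ[X], p.natDegree ≤ n → ∀ i, 1 ≤ |p.coeff i| →
      ∀ γ r : ℝ, 0 ≤ r → r ≤ 1 → A * γ < r ^ n →
        ∃ c : ℝ → ℝ, {ξ | ξ ∈ Icc (-B) B ∧ |p.eval ξ| < γ} ⊆
          ⋃ ρ ∈ insert (-B) p.derivative.roots.toFinset, Icc (c ρ - r) (c ρ + r) := by
  obtain ⟨A, hA, hsmall⟩ := exists_pow_le_mul_of_abs_eval_le_on_Icc n B
  refine ⟨A, hA, fun p hp i hi γ r hr0 hr1 hAγ => exists_cover_of_forall_sub_le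
    (fun s hs => ⟨-B, Finset.mem_insert_self _ _, hs.1.1⟩) ?_⟩
  intro s hs s' hs' _ hRfree
  by_contra! hlt
  have hp_le : ∀ u ∈ Icc s (s + r), |p.eval u| ≤ γ := fun u hu =>
    (p.abs_eval_le_max_of_forall_notMem_roots_derivative
      (fun u hu hroot => hRfree u (Finset.mem_insert_of_mem (Multiset.mem_toFinset.2 hroot)) hu)
      ⟨hu.1, by linarith [hu.2]⟩).trans (max_le hs.2.le hs'.2.le)
  exact (hsmall p hp i hi s r γ (abs_le.2 hs.1) hr0 hr1 hp_le).not_gt hAγ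

theorem Finset.exists_fin_cover_of_card_le {α β : Type*} [Inhabited α] (R : Finset α) {N : ℕ}
    (hN : R.card ≤ N) (U : α → Set β) : ∃ g : Fin N → α, ⋃ ρ ∈ R, U ρ ⊆ ⋃ i, U (g i) := by
  refine ⟨fun i => if h : (i : ℕ) < R.card then R.equivFin.symm ⟨i, h⟩ else default, ?_⟩
  refine iUnion₂_subset fun ρ hρ =>
    subset_iUnion_of_subset (Fin.castLE hN (R.equivFin ⟨ρ, hρ⟩)) ?_
  simp

theorem mul_pow_two_pow_lt_mul_pow {A a t : ℝ} (n : ℕ) (hA : 0 ≤ A) (ht0 : 0 < t)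
    (ht1 : t ≤ 1) (hAt : A * t < a ^ n) : A * t ^ 2 ^ n < (a * t) ^ n :=
  calc A * t ^ 2 ^ n ≤ A * t ^ (n + 1) :=
        mul_le_mul_of_nonneg_left (pow_le_pow_of_le_one ht0.le ht1 Nat.lt_two_pow_self) hA
    _ = A * t * t ^ n := by ring
    _ < a ^ n * t ^ n := by gcongr
    _ = (a * t) ^ n := (mul_pow _ _ _).symm

theorem statement14 (n : ℕ) (hn : 1 ≤ n) :
    ∃ c : ℝ, 0 < c ∧
      ∀ b : ℕ → ℝ, (∀ i ≤ n, |b i| ≤ 1) → (∃ i ≤ n, |b i| = 1) →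
        ∀ γ : ℝ, 0 < γ → γ ≤ c →
          ∃ ξp : Fin (n * (n + 1) / 2) → ℝ,
            {ξ : ℝ | ξ ∈ Set.Icc (-4 : ℝ) 4 ∧
                |∑ i ∈ Finset.range (n + 1), b i * ξ ^ i| < γ} ⊆
              ⋃ i : Fin (n * (n + 1) / 2),
                Set.Icc (ξp i - 4 * γ ^ ((1 : ℝ) / 2 ^ n))
                  (ξp i + 4 * γ ^ ((1 : ℝ) / 2 ^ n)) := by
  obtain ⟨A, hA, hcover⟩ := exists_cover_sublevelSet n 4
  obtain ⟨δ, hδ, hAδ⟩ := exists_pos_mul_lt (by positivity : (0 : ℝ) < 4 ^ n) A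
  refine ⟨min (1 / 4) δ ^ 2 ^ n, by positivity, ?_⟩
  rintro b - ⟨i, hi, hbi⟩ γ hγ hγc
  have htγ : (γ ^ ((1 : ℝ) / 2 ^ n)) ^ 2 ^ n = γ := by
    rw [show (1 : ℝ) / 2 ^ n = ((2 ^ n : ℕ) : ℝ)⁻¹ by push_cast; ring]
    exact Real.rpow_inv_natCast_pow hγ.le (by positivity)
  set t := γ ^ ((1 : ℝ) / 2 ^ n)
  have ht0 : 0 < t := by positivity
  have ht : t ≤ min (1 / 4) δ :=
    (pow_le_pow_iff_left₀ ht0.le (by positivity) (by positivity)).1 (htγ ▸ hγc)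
  have ht4 : 4 * t ≤ 1 := by linarith [min_le_left (1 / 4) δ]
  have hAγ : A * γ < (4 * t) ^ n := htγ ▸ mul_pow_two_pow_lt_mul_pow n hA ht0
    (by linarith) ((mul_le_mul_of_nonneg_left (ht.trans (min_le_right _ _)) hA).trans_lt hAδ)
  set p : ℝ[X] := ∑ i ∈ Finset.range (n + 1), C (b i) * X ^ i
  have hpdeg : p.natDegree ≤ n := natDegree_sum_le_of_forall_le _ _ fun j hj =>
    (natDegree_C_mul_X_pow_le _ _).trans (Finset.mem_range_succ_iff.1 hj)
  have hpcoeff : p.coeff i = b i := by simp [p, finsetSum_coeff, Nat.lt_succ_of_le hi]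
  obtain ⟨c, hc⟩ := hcover p hpdeg i (by rw [hpcoeff, hbi]) γ (4 * t) (by positivity) ht4 hAγ
  have hcard : n ≤ n * (n + 1) / 2 := by rw [Nat.le_div_iff_mul_le two_pos]; nlinarith
  obtain ⟨g, hg⟩ := Finset.exists_fin_cover_of_card_le _
    ((card_insert_roots_derivative_le hpdeg hn _).trans hcard) _
  refine ⟨c ∘ g, fun ξ hξ => hg (hc ?_)⟩
  simpa [p, eval_finsetSum] using hξ
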